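/- Let U be a nonzero n×m real matrix, A an n×n real symmetric matrix with A ≺ u·Id, Δ > 0 and u' = u + Δ, and assume ψ(A,u) − ψ(A,u') > 0. Define for v ∈ ℝⁿ: F(v) = (vᵗ(u'·Id − A)⁻²v/(ψ(A,u) − ψ(A,u')))·‖U‖² + vᵗ(u'·Id − A)⁻¹v. Then Σ_{j≤m} F(Ue_j) ≤ ‖U‖²/Δ + ψ(A,u). -/

import Mathlib

open Matrix
open scoped BigOperators

/-- The operator norm of a matrix viewed as a map `ℓ₂^m → ℓ₂^n`. -/
noncomputable def opNorm {n m : ℕ} (U : Matrix (Fin n) (Fin m) ℝ) : ℝ :=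
  ‖LinearMap.toContinuousLinearMap (Matrix.toEuclideanLin U)‖

/-- `ψ(A, u) = Tr (Uᵗ (u·Id − A)⁻¹ U)`. -/
noncomputable def psi {n m : ℕ} (U : Matrix (Fin n) (Fin m) ℝ)
    (A : Matrix (Fin n) (Fin n) ℝ) (u : ℝ) : ℝ :=
  (Uᵀ * (u • 1 - A)⁻¹ * U).trace

/-! With `B = u·Id − A` and `C = B + Δ·Id`, the resolvent identity `B⁻¹ − C⁻¹ = Δ B⁻¹C⁻¹`
(used once on each side) gives `B⁻¹ − C⁻¹ − Δ C⁻² = Δ² C⁻¹B⁻¹C⁻¹ ⪰ 0`, hence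
`Δ · Tr(Uᵗ C⁻² U) ≤ ψ(A,u) − ψ(A,u')`. Summed over the columns, the first part of `F` is this
trace divided by `ψ(A,u) − ψ(A,u')`, so at most `‖U‖²/Δ`, and the second part is
`ψ(A,u') < ψ(A,u)`. -/

namespace Matrix

theorem sum_dotProduct_mulVec_col_eq_trace {R : Type*} [CommSemiring R] {n m : Type*}
    [Fintype n] [Fintype m] (U : Matrix n m R) (M : Matrix n n R) :
    ∑ j, (fun i => U i j) ⬝ᵥ (M *ᵥ fun i => U i j) = (Uᵀ * M * U).trace := by
  simp only [trace, diag_apply, mul_apply, dotProduct, mulVec, transpose_apply, Finset.sum_mul]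
  refine Finset.sum_congr rfl fun j _ => ?_
  simp only [Finset.mul_sum]
  rw [Finset.sum_comm]
  exact Finset.sum_congr rfl fun i _ => Finset.sum_congr rfl fun k _ => by ring

theorem PosDef.add_smul_one {n : Type*} [DecidableEq n] {B : Matrix n n ℝ} (hB : B.PosDef)
    {Δ : ℝ} (hΔ : 0 ≤ Δ) : (B + Δ • 1).PosDef :=
  hB.add_posSemidef (PosSemidef.one.smul hΔ)

variable {n : Type*} [Fintype n] [DecidableEq n]

theorem inv_sub_inv_add_smul_one {B : Matrix n n ℝ} (hB : B.PosDef) {Δ : ℝ} (hΔ : 0 ≤ Δ) :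
    B⁻¹ - (B + Δ • 1)⁻¹ - Δ • ((B + Δ • 1)⁻¹ * (B + Δ • 1)⁻¹)
      = Δ ^ 2 • ((B + Δ • 1)⁻¹ * B⁻¹ * (B + Δ • 1)⁻¹) := by
  set C := B + Δ • 1
  have hunit : IsUnit B ↔ IsUnit C := iff_of_true hB.isUnit (hB.add_smul_one hΔ).isUnit
  have hBC : B⁻¹ - C⁻¹ = Δ • (B⁻¹ * C⁻¹) := by
    rw [inv_sub_inv hunit, show C - B = Δ • 1 by simp [C]]; simp
  have hCB : B⁻¹ - C⁻¹ = Δ • (C⁻¹ * B⁻¹) := by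
    rw [← neg_sub, inv_sub_inv hunit.symm, show B - C = -(Δ • 1) by simp [C]]; simp
  calc B⁻¹ - C⁻¹ - Δ • (C⁻¹ * C⁻¹) = Δ • (C⁻¹ * B⁻¹) - Δ • (C⁻¹ * C⁻¹) := by rw [hCB]
    _ = Δ • (C⁻¹ * (B⁻¹ - C⁻¹)) := by rw [Matrix.mul_sub, smul_sub]
    _ = Δ ^ 2 • (C⁻¹ * B⁻¹ * C⁻¹) := by
        rw [hBC, Matrix.mul_smul, smul_smul, sq, Matrix.mul_assoc]

theorem PosDef.posSemidef_inv_sub_inv_add_smul_one_sub {B : Matrix n n ℝ} (hB : B.PosDef) {Δ : ℝ}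
    (hΔ : 0 ≤ Δ) :
    (B⁻¹ - (B + Δ • 1)⁻¹ - Δ • ((B + Δ • 1)⁻¹ * (B + Δ • 1)⁻¹)).PosSemidef := by
  have hconj := hB.posSemidef.inv.conjTranspose_mul_mul_same (B + Δ • 1)⁻¹
  rw [(hB.add_smul_one hΔ).isHermitian.inv.eq] at hconj
  rw [inv_sub_inv_add_smul_one hB hΔ]
  exact hconj.smul (sq_nonneg Δ)

end Matrix

theorem mul_trace_sq_inv_le_psi_sub_psi {n m : ℕ} (U : Matrix (Fin n) (Fin m) ℝ)
    (A : Matrix (Fin n) (Fin n) ℝ) {u Δ : ℝ} (hpd : (u • 1 - A).PosDef) (hΔ : 0 ≤ Δ) :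
    Δ * (Uᵀ * (((u + Δ) • 1 - A)⁻¹ * ((u + Δ) • 1 - A)⁻¹) * U).trace
      ≤ psi U A u - psi U A (u + Δ) := by
  have hshift : (u + Δ) • (1 : Matrix (Fin n) (Fin n) ℝ) - A = (u • 1 - A) + Δ • 1 := by module
  have hnonneg := ((hpd.posSemidef_inv_sub_inv_add_smul_one_sub hΔ).conjTranspose_mul_mul_same
    U).trace_nonneg
  rw [conjTranspose_eq_transpose_of_trivial] at hnonneg
  simp only [psi, hshift]
  simp only [Matrix.mul_sub, Matrix.sub_mul, Matrix.mul_smul, Matrix.smul_mul, trace_sub,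
    trace_smul, smul_eq_mul] at hnonneg
  linarith

theorem sum_F_upper_bound_general {n m : ℕ} (U : Matrix (Fin n) (Fin m) ℝ)
    (A : Matrix (Fin n) (Fin n) ℝ)
    (u Δ : ℝ) (hpd : (u • 1 - A).PosDef) (hΔ : 0 < Δ)
    (hΨ : 0 < psi U A u - psi U A (u + Δ)) :
    ∑ j, ((fun i => U i j) ⬝ᵥ ((((u + Δ) • 1 - A)⁻¹ * ((u + Δ) • 1 - A)⁻¹) *ᵥ
            (fun i => U i j)) / (psi U A u - psi U A (u + Δ)) * opNorm U ^ 2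
        + (fun i => U i j) ⬝ᵥ (((u + Δ) • 1 - A)⁻¹ *ᵥ (fun i => U i j))) ≤
      opNorm U ^ 2 / Δ + psi U A u := by
  rw [Finset.sum_add_distrib, ← Finset.sum_mul, ← Finset.sum_div,
    sum_dotProduct_mulVec_col_eq_trace, sum_dotProduct_mulVec_col_eq_trace]
  change _ + psi U A (u + Δ) ≤ _
  have hratio : (Uᵀ * (((u + Δ) • 1 - A)⁻¹ * ((u + Δ) • 1 - A)⁻¹) * U).trace
      / (psi U A u - psi U A (u + Δ)) ≤ 1 / Δ := by
    rw [div_le_div_iff₀ hΨ hΔ]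
    linarith [mul_trace_sq_inv_le_psi_sub_psi U A hpd hΔ.le]
  calc _ ≤ 1 / Δ * opNorm U ^ 2 + psi U A (u + Δ) := by gcongr
    _ ≤ opNorm U ^ 2 / Δ + psi U A u := by rw [one_div_mul_eq_div]; linarith

/-- **Lemma (average of `F` over the columns).** If `A ≺ u·Id`, `u' = u + Δ` with
`Δ > 0`, and `ψ(A,u) − ψ(A,u') > 0`, then
`∑_j F(Ue_j) ≤ ‖U‖²/Δ + ψ(A,u)` where
`F(v) = (vᵗ(u'Id−A)⁻²v/(ψ(A,u)−ψ(A,u')))‖U‖² + vᵗ(u'Id−A)⁻¹v`. -/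
theorem sum_F_upper_bound {n m : ℕ} (U : Matrix (Fin n) (Fin m) ℝ) (hU : U ≠ 0)
    (A : Matrix (Fin n) (Fin n) ℝ) (hA : A.IsHermitian)
    (u Δ : ℝ) (hpd : (u • 1 - A).PosDef) (hΔ : 0 < Δ)
    (hΨ : 0 < psi U A u - psi U A (u + Δ)) :
    ∑ j, ((fun i => U i j) ⬝ᵥ ((((u + Δ) • 1 - A)⁻¹ * ((u + Δ) • 1 - A)⁻¹) *ᵥ
            (fun i => U i j)) / (psi U A u - psi U A (u + Δ)) * opNorm U ^ 2
        + (fun i => U i j) ⬝ᵥ (((u + Δ) • 1 - A)⁻¹ *ᵥ (fun i => U i j))) ≤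
      opNorm U ^ 2 / Δ + psi U A u :=
  sum_F_upper_bound_general U A u Δ hpd hΔ hΨ
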